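/- Let GL(3,ℂ) × GL(2,ℂ) act on V = Sym²(ℂ³) ⊗ ℂ² via (g,h)·(A ⊗ v) = (gAgᵀ) ⊗ (hv) (i.e., the representation 2ϖ₁ ⊠ ϖ₁). Then the ring of SL(3,ℂ) × SL(2,ℂ)-invariant polynomials on V contains a nonzero homogeneous invariant of degree 12: namely, identifying V with pairs (A,B) of symmetric 3×3 matrices, the discriminant of the binary cubic f(x,y) = det(xA + yB) is such an invariant. -/

import Mathlib

open Polynomial Matrix

/-!
Expanding `det(uA + vB) = u³ det A + u²v D(A,B) + uv² D(B,A) + v³ det B`, with `D(A,B)` the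
polarization of the determinant, makes `discDet A B` the discriminant of a binary cubic whose
coefficients are cubic in `(A, B)`; this gives degree 12. Conjugation `M ↦ gMgᵀ` multiplies
`det(xA + B)` by `(det g)² = 1`, and a linear substitution `h` in `(x, y)` multiplies the
discriminant of a binary cubic by `(det h)⁶ = 1`.
-/

/-- The binary cubic `f(x,y) = det(xA + yB)`, dehomogenized at `y = 1`:
the polynomial `det(xA + B)` in `x`, whose coefficients `a = coeff 3`, `b = coeff 2`,
`c = coeff 1`, `d = coeff 0` are the coefficients of the binary cubic. -/
noncomputable def detCubic (A B : Matrix (Fin 3) (Fin 3) ℂ) : Polynomial ℂ :=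
  ((Polynomial.X : Polynomial ℂ) • A.map Polynomial.C + B.map Polynomial.C).det

noncomputable def discCubic (p : Polynomial ℂ) : ℂ :=
  p.coeff 2 ^ 2 * p.coeff 1 ^ 2 - 4 * p.coeff 3 * p.coeff 1 ^ 3 -
    4 * p.coeff 2 ^ 3 * p.coeff 0 - 27 * p.coeff 3 ^ 2 * p.coeff 0 ^ 2 +
    18 * p.coeff 3 * p.coeff 2 * p.coeff 1 * p.coeff 0

noncomputable def discDet (A B : Matrix (Fin 3) (Fin 3) ℂ) : ℂ :=
  discCubic (detCubic A B)

section BinaryCubic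

variable {R : Type*} [CommRing R]

def binaryCubicDisc (a b c d : R) : R :=
  b ^ 2 * c ^ 2 - 4 * a * c ^ 3 - 4 * b ^ 3 * d - 27 * a ^ 2 * d ^ 2 + 18 * a * b * c * d

theorem binaryCubicDisc_mul (s a b c d : R) :
    binaryCubicDisc (s * a) (s * b) (s * c) (s * d) = s ^ 4 * binaryCubicDisc a b c d := by
  unfold binaryCubicDisc; ring

/-- The coefficients of `f(px + qy, rx + sy)` in terms of those of
`f(x, y) = a x³ + b x² y + c x y² + d y³`. -/
theorem binaryCubicDisc_linearSubst (p q r s a b c d : R) :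
    binaryCubicDisc
      (p ^ 3 * a + p ^ 2 * r * b + p * r ^ 2 * c + r ^ 3 * d)
      (3 * p ^ 2 * q * a + (2 * p * q * r + p ^ 2 * s) * b + (q * r ^ 2 + 2 * p * r * s) * c +
        3 * r ^ 2 * s * d)
      (3 * q ^ 2 * p * a + (2 * q * p * s + q ^ 2 * r) * b + (p * s ^ 2 + 2 * q * s * r) * c +
        3 * s ^ 2 * r * d)
      (q ^ 3 * a + q ^ 2 * s * b + q * s ^ 2 * c + s ^ 3 * d) =
      (p * s - q * r) ^ 6 * binaryCubicDisc a b c d := by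
  unfold binaryCubicDisc; ring

end BinaryCubic

namespace Matrix

variable {R S : Type*} [CommRing R] [CommRing S]

def mixedDet (A B : Matrix (Fin 3) (Fin 3) R) : R :=
  ∑ i, (A.updateRow i (B i)).det

theorem det_smul_add_smul (A B : Matrix (Fin 3) (Fin 3) R) (u v : R) :
    (u • A + v • B).det =
      u ^ 3 * A.det + u ^ 2 * v * mixedDet A B + u * v ^ 2 * mixedDet B A + v ^ 3 * B.det := by
  simp [mixedDet, Fin.sum_univ_three, det_fin_three, updateRow_apply]
  ring

theorem mixedDet_map (f : R →+* S) (A B : Matrix (Fin 3) (Fin 3) R) :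
    mixedDet (A.map f) (B.map f) = f (mixedDet A B) := by
  simp [mixedDet, Fin.sum_univ_three, det_fin_three, updateRow_apply]

theorem mixedDet_smul (t : R) (A B : Matrix (Fin 3) (Fin 3) R) :
    mixedDet (t • A) (t • B) = t ^ 3 * mixedDet A B := by
  simp [mixedDet, Fin.sum_univ_three, det_fin_three, updateRow_apply]
  ring

theorem mixedDet_smul_add_smul (p q r s : R) (A B : Matrix (Fin 3) (Fin 3) R) :
    mixedDet (p • A + r • B) (q • A + s • B) =
      3 * p ^ 2 * q * A.det + (2 * p * q * r + p ^ 2 * s) * mixedDet A B +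
        (q * r ^ 2 + 2 * p * r * s) * mixedDet B A + 3 * r ^ 2 * s * B.det := by
  simp [mixedDet, Fin.sum_univ_three, det_fin_three, updateRow_apply]
  ring

end Matrix

theorem detCubic_eq (A B : Matrix (Fin 3) (Fin 3) ℂ) :
    detCubic A B = C B.det + C (mixedDet B A) * X + C (mixedDet A B) * X ^ 2 + C A.det * X ^ 3 := by
  have h := det_smul_add_smul (A.map (C : ℂ →+* ℂ[X])) (B.map C) X 1
  rw [one_smul] at h
  rw [detCubic, h, mixedDet_map, mixedDet_map, ← RingHom.mapMatrix_apply, ← RingHom.mapMatrix_apply,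
    ← RingHom.map_det, ← RingHom.map_det]
  ring

theorem discDet_eq (A B : Matrix (Fin 3) (Fin 3) ℂ) :
    discDet A B = binaryCubicDisc A.det (mixedDet A B) (mixedDet B A) B.det := by
  simp [discDet, discCubic, binaryCubicDisc, detCubic_eq, coeff_X, coeff_C, coeff_X_pow]

theorem detCubic_conj (g : Matrix (Fin 3) (Fin 3) ℂ) (A B : Matrix (Fin 3) (Fin 3) ℂ) :
    detCubic (g * A * gᵀ) (g * B * gᵀ) = C (g.det ^ 2) * detCubic A B := by
  have hconj : (X : ℂ[X]) • (g.map C * A.map C * (g.map C)ᵀ) + g.map C * B.map C * (g.map C)ᵀ =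
      g.map C * ((X : ℂ[X]) • A.map C + B.map C) * (g.map C)ᵀ := by
    rw [Matrix.mul_add, Matrix.add_mul, Matrix.mul_smul, Matrix.smul_mul]
  rw [detCubic, detCubic, Matrix.map_mul, Matrix.map_mul, Matrix.map_mul, Matrix.map_mul,
    transpose_map, hconj, det_mul, det_mul, det_transpose,
    ← RingHom.mapMatrix_apply, ← RingHom.map_det, C_pow]
  ring

/-- On pairs `(A,B)` of symmetric `3×3` complex matrices (identified with
`Sym²(ℂ³) ⊗ ℂ²`), the discriminant of the binary cubic `det(xA+yB)` is a nonzero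
homogeneous degree-12 invariant for the action of `SL(3,ℂ) × SL(2,ℂ)` given by
`A ↦ gAgᵀ` and by linear substitution in `(x,y)`. -/
theorem stmt9 :
    (∀ (t : ℂ) (A B : Matrix (Fin 3) (Fin 3) ℂ),
      discDet (t • A) (t • B) = t ^ 12 * discDet A B) ∧
    (∀ (g : Matrix.SpecialLinearGroup (Fin 3) ℂ) (A B : Matrix (Fin 3) (Fin 3) ℂ),
      A.IsSymm → B.IsSymm →
        discDet (g.1 * A * g.1ᵀ) (g.1 * B * g.1ᵀ) = discDet A B) ∧
    (∀ (h : Matrix.SpecialLinearGroup (Fin 2) ℂ) (A B : Matrix (Fin 3) (Fin 3) ℂ),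
      A.IsSymm → B.IsSymm →
        discDet (h.1 0 0 • A + h.1 1 0 • B) (h.1 0 1 • A + h.1 1 1 • B) = discDet A B) ∧
    (∃ A B : Matrix (Fin 3) (Fin 3) ℂ, A.IsSymm ∧ B.IsSymm ∧ discDet A B ≠ 0) := by
  refine ⟨fun t A B => ?_, fun g A B _ _ => ?_, fun h A B _ _ => ?_, ?_⟩
  · rw [discDet_eq, discDet_eq, det_smul, det_smul, mixedDet_smul, mixedDet_smul, Fintype.card_fin,
      binaryCubicDisc_mul]
    ring
  · rw [discDet, discDet, detCubic_conj, g.2]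
    simp [discCubic]
  · have hdet : h.1 0 0 * h.1 1 1 - h.1 0 1 * h.1 1 0 = 1 := by
      rw [← det_fin_two]; exact h.2
    rw [discDet_eq, discDet_eq, det_smul_add_smul, det_smul_add_smul, mixedDet_smul_add_smul,
      mixedDet_smul_add_smul, binaryCubicDisc_linearSubst, hdet, one_pow, one_mul]
  · -- `det(x + diag(0, 1, 2)) = x(x + 1)(x + 2)` has distinct roots.
    refine ⟨1, diagonal ![0, 1, 2], isSymm_one, isSymm_diagonal _, ?_⟩
    simp [discDet_eq, binaryCubicDisc, mixedDet, Fin.sum_univ_three, Fin.prod_univ_three,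
      det_fin_three, updateRow_apply]
    norm_num
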